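/- arXiv:2308.09500 — 10 statements merged into one kernel-verified Lean document; each statement's English description precedes it below -/
import Mathlib

section
/- Let Λ be a non-ordinary numerical semigroup and let d be the gcd of the left elements of Λ (the elements smaller than the conductor). If d = 1, then every numerical semigroup containing the left elements of Λ contains the numerical semigroup generated by the left elements, and consequently Λ has only finitely many descendants in the semigroup tree; in particular Λ does not lie in any infinite chain. -/
def IsNumSgp (S : Set ℕ) : Prop :=
  0 ∈ S ∧ (∀ a ∈ S, ∀ b ∈ S, a + b ∈ S) ∧ Sᶜ.Finite

noncomputable def multNS (S : Set ℕ) : ℕ := sInf {x | x ∈ S ∧ x ≠ 0}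

noncomputable def condNS (S : Set ℕ) : ℕ := sInf {c : ℕ | ∀ n, c ≤ n → n ∈ S}

noncomputable def genusNS (S : Set ℕ) : ℕ := Sᶜ.ncard

def IsMinGen (S : Set ℕ) (a : ℕ) : Prop :=
  a ∈ S ∧ a ≠ 0 ∧ ¬ ∃ x ∈ S, ∃ y ∈ S, x ≠ 0 ∧ y ≠ 0 ∧ x + y = a

def leftElts (S : Set ℕ) : Set ℕ := {x | x ∈ S ∧ x < condNS S}

def IsOrdinary (S : Set ℕ) : Prop := ∃ m : ℕ, S = {0} ∪ {n | m ≤ n}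

def IsChild (S C : Set ℕ) : Prop :=
  ∃ a, IsMinGen S a ∧ condNS S ≤ a ∧ C = S \ {a}

def IsDescendant (S T : Set ℕ) : Prop := Relation.ReflTransGen IsChild S T

def pushNS (m : ℕ) (S : Set ℕ) : Set ℕ := {0} ∪ (fun x => m + x) '' S

/-! Since the left elements of `Λ` have gcd `1`, the submonoid `L` they generate is cofinite
(Frobenius). A removed generator is at least the conductor and the conductor never decreases
along the tree, so every descendant keeps the left elements of `Λ`, hence contains `L`. There are
only finitely many subsets of `ℕ` containing a cofinite set. -/

lemma exists_forall_ge_mem_of_compl_finite {T : Set ℕ} (hT : Tᶜ.Finite) :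
    ∃ c, ∀ n, c ≤ n → n ∈ T := by
  obtain ⟨b, hb⟩ := hT.bddAbove
  exact ⟨b + 1, fun n hn => by_contra fun hnT => absurd (hb hnT) (by omega)⟩

lemma condNS_le_condNS_of_subset {T S : Set ℕ} (hTS : T ⊆ S) (hT : Tᶜ.Finite) :
    condNS S ≤ condNS T :=
  csInf_le_csInf (OrderBot.bddBelow _) (exists_forall_ge_mem_of_compl_finite hT)
    fun _ hc n hn => hTS (hc n hn)

lemma IsNumSgp.closure_subset {T A : Set ℕ} (hT : IsNumSgp T) (hA : A ⊆ T) :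
    (AddSubmonoid.closure A : Set ℕ) ⊆ T :=
  AddSubmonoid.closure_le (S := ⟨⟨T, fun {a b} ha hb => hT.2.1 a ha b hb⟩, hT.1⟩) |>.mpr hA

lemma Nat.compl_closure_finite_of_setGcd_eq_one {s : Set ℕ} (hs : Nat.setGcd s = 1) :
    (AddSubmonoid.closure s : Set ℕ)ᶜ.Finite := by
  obtain ⟨n, hn⟩ := Nat.exists_mem_closure_of_ge s
  refine (Set.finite_Iio n).subset fun m hm => ?_
  by_contra hmn
  exact hm (hn m (not_lt.mp hmn) (hs ▸ one_dvd m))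

lemma Set.finite_setOf_superset_of_compl_finite {α : Type*} {L : Set α} (hL : Lᶜ.Finite) :
    {T | L ⊆ T}.Finite := by
  have hsub : {T | L ⊆ T} = compl ⁻¹' {U | U ⊆ Lᶜ} := by
    ext T
    exact Set.compl_subset_compl.symm
  rw [hsub]
  exact hL.finite_subsets.preimage compl_injective.injOn

lemma IsNumSgp.diff_singleton_of_isMinGen {T : Set ℕ} {a : ℕ} (hT : IsNumSgp T)
    (ha : IsMinGen T a) : IsNumSgp (T \ {a}) := by
  obtain ⟨haT, ha0, hmin⟩ := ha
  refine ⟨⟨hT.1, fun h => ha0 h.symm⟩, ?_, ?_⟩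
  · rintro x ⟨hx, hxa⟩ y ⟨hy, hya⟩
    refine ⟨hT.2.1 x hx y hy, fun hxy : x + y = a => ?_⟩
    rcases Nat.eq_zero_or_pos x with hx0 | hx0
    · exact hya (by simp only [Set.mem_singleton_iff]; omega)
    rcases Nat.eq_zero_or_pos y with hy0 | hy0
    · exact hxa (by simp only [Set.mem_singleton_iff]; omega)
    exact hmin ⟨x, hx, y, hy, hx0.ne', hy0.ne', hxy⟩
  · rw [Set.sdiff_eq, Set.compl_inter, compl_compl]
    exact hT.2.2.union (Set.finite_singleton a)

namespace IsChild

variable {T C : Set ℕ}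

lemma subset (h : IsChild T C) : C ⊆ T := by
  obtain ⟨a, -, -, rfl⟩ := h
  exact Set.sdiff_subset

lemma isNumSgp (hT : IsNumSgp T) (h : IsChild T C) : IsNumSgp C := by
  obtain ⟨a, ha, -, rfl⟩ := h
  exact hT.diff_singleton_of_isMinGen ha

lemma leftElts_subset_leftElts (hT : IsNumSgp T) (h : IsChild T C) :
    leftElts T ⊆ leftElts C := by
  have hcond : condNS T ≤ condNS C := condNS_le_condNS_of_subset h.subset (h.isNumSgp hT).2.2
  obtain ⟨a, -, hTa, rfl⟩ := h
  rintro x ⟨hxT, hxc⟩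
  refine ⟨⟨hxT, ?_⟩, by omega⟩
  rintro rfl
  omega

end IsChild

namespace IsDescendant

variable {S T : Set ℕ}

lemma isNumSgp (hS : IsNumSgp S) (h : IsDescendant S T) : IsNumSgp T := by
  induction h with
  | refl => exact hS
  | tail _ hchild ih => exact hchild.isNumSgp ih

lemma leftElts_subset_leftElts (hS : IsNumSgp S) (h : IsDescendant S T) :
    leftElts S ⊆ leftElts T := by
  induction h with
  | refl => exact subset_rfl
  | tail hdesc hchild ih =>
    exact ih.trans (hchild.leftElts_subset_leftElts (isNumSgp hS hdesc))

end IsDescendant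

theorem stmt6_general (S : Set ℕ) (h : IsNumSgp S)
    (hd : ∀ e : ℕ, (∀ x ∈ leftElts S, e ∣ x) → e = 1) :
    (∀ T : Set ℕ, IsNumSgp T → leftElts S ⊆ T →
      (AddSubmonoid.closure (leftElts S) : Set ℕ) ⊆ T) ∧
    {T | IsDescendant S T}.Finite := by
  refine ⟨fun T hT hsub => hT.closure_subset hsub, ?_⟩
  have hgcd : Nat.setGcd (leftElts S) = 1 := hd _ fun _ => Nat.setGcd_dvd_of_mem
  refine (Set.finite_setOf_superset_of_compl_finite
    (Nat.compl_closure_finite_of_setGcd_eq_one hgcd)).subset fun T hT => ?_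
  exact (IsDescendant.isNumSgp h hT).closure_subset
    ((IsDescendant.leftElts_subset_leftElts h hT).trans fun _ hx => hx.1)

theorem stmt6 (S : Set ℕ) (h : IsNumSgp S) (hno : ¬ IsOrdinary S)
    (hd : ∀ e : ℕ, (∀ x ∈ leftElts S, e ∣ x) → e = 1) :
    (∀ T : Set ℕ, IsNumSgp T → leftElts S ⊆ T →
      (AddSubmonoid.closure (leftElts S) : Set ℕ) ⊆ T) ∧
    {T | IsDescendant S T}.Finite :=
  stmt6_general S h hd
end

section
/- Let Λ be a non-ordinary numerical semigroup and let d be the gcd of its left elements. If d ≠ 1, then Λ lies in an infinite chain, i.e., Λ has descendants of every genus g ≥ g(Λ). -/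
lemma cond_mem_set (S : Set ℕ) (h : IsNumSgp S) : ∀ n, condNS S ≤ n → n ∈ S := by
  have hne : {c : ℕ | ∀ n, c ≤ n → n ∈ S}.Nonempty := by
    obtain ⟨-, -, hfin⟩ := h
    rcases Set.Finite.bddAbove hfin with ⟨B, hB⟩
    refine ⟨B + 1, fun n hn => ?_⟩
    by_contra hx
    have := hB hx
    omega
  exact Nat.sInf_mem hne

lemma step_lemma (d : ℕ) (hd : 1 < d) (T : Set ℕ) (hT : IsNumSgp T)
    (hdvd : ∀ x ∈ leftElts T, d ∣ x) (hne : ∃ ℓ ∈ leftElts T, ℓ ≠ 0) :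
    ∃ T', IsChild T T' ∧ IsNumSgp T' ∧ (∀ x ∈ leftElts T', d ∣ x) ∧
      (∃ ℓ ∈ leftElts T', ℓ ≠ 0) ∧ genusNS T' = genusNS T + 1 := by
  obtain ⟨ℓ, ⟨hℓT, hℓc⟩, hℓ0⟩ := hne
  set c := condNS T with hc
  have hmem : ∀ n, c ≤ n → n ∈ T := cond_mem_set T hT
  have hdℓ : d ∣ ℓ := hdvd ℓ ⟨hℓT, hℓc⟩
  have hℓd : d ≤ ℓ := Nat.le_of_dvd (Nat.pos_of_ne_zero hℓ0) hdℓ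
  have hcd : d + 1 ≤ c := by omega
  set a := if d ∣ c then c + 1 else c with ha
  have hca : c ≤ a := by
    rw [ha]; split <;> omega
  have haub : a ≤ c + 1 := by
    rw [ha]; split <;> omega
  have haT : a ∈ T := hmem a hca
  have hnda : ¬ d ∣ a := by
    rw [ha]; split
    · rename_i hdc
      intro h2
      have : d ∣ 1 := by
        have := Nat.dvd_sub h2 hdc
        simpa using this
      have := Nat.le_of_dvd one_pos this
      omega
    · rename_i hdc; exact hdc
  -- small elements of T are ≥ d
  have hsmall : ∀ x ∈ T, x ≠ 0 → x < c → d ≤ x := by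
    intro x hx hx0 hxc
    exact Nat.le_of_dvd (Nat.pos_of_ne_zero hx0) (hdvd x ⟨hx, hxc⟩)
  have hmin : IsMinGen T a := by
    refine ⟨haT, by omega, ?_⟩
    rintro ⟨x, hx, y, hy, hx0, hy0, hxy⟩
    by_cases hxc : x < c
    · by_cases hyc : y < c
      · exact hnda (hxy ▸ Nat.dvd_add (hdvd x ⟨hx, hxc⟩) (hdvd y ⟨hy, hyc⟩))
      · have := hsmall x hx hx0 hxc
        omega
    · by_cases hyc : y < c
      · have := hsmall y hy hy0 hyc
        omega
      · omega
  refine ⟨T \ {a}, ⟨a, hmin, hca, rfl⟩, ?_, ?_, ?_, ?_⟩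
  case _ =>
    refine ⟨⟨hT.1, by simp; omega⟩, ?_, ?_⟩
    · rintro x ⟨hx, hx'⟩ y ⟨hy, hy'⟩
      refine ⟨hT.2.1 x hx y hy, ?_⟩
      simp only [Set.mem_singleton_iff] at *
      intro hxy
      rcases Nat.eq_zero_or_pos x with rfl | hx0
      · simp at hxy; omega
      rcases Nat.eq_zero_or_pos y with rfl | hy0
      · simp at hxy; omega
      exact hmin.2.2 ⟨x, hx, y, hy, by omega, by omega, hxy⟩
    · have : (T \ {a})ᶜ = Tᶜ ∪ {a} := by
        ext x; simp [not_and_or]; tauto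
      rw [this]
      exact hT.2.2.union (Set.finite_singleton a)
  all_goals {
    have hcond' : condNS (T \ {a}) = a + 1 := by
      have hmem' : (a + 1) ∈ {c : ℕ | ∀ n, c ≤ n → n ∈ T \ {a}} := by
        intro n hn
        exact ⟨hmem n (by omega), by simp; omega⟩
      apply le_antisymm (Nat.sInf_le hmem')
      apply le_csInf ⟨a + 1, hmem'⟩
      intro b hb
      by_contra hba
      have : a ∈ T \ {a} := hb a (by omega)
      simp at this
    first
    | -- divisibility of left elements
      (intro x hx
       obtain ⟨⟨hxT, hxa⟩, hxlt⟩ := hx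
       rw [hcond'] at hxlt
       simp only [Set.mem_singleton_iff] at hxa
       by_cases hxc : x < c
       · exact hdvd x ⟨hxT, hxc⟩
       · have hxeq : x = c := by omega
         have haeq : a = c + 1 := by omega
         rw [ha] at haeq
         subst hxeq
         by_contra hdc
         rw [if_neg hdc] at haeq
         omega)
    | -- nonzero left element
      (exact ⟨ℓ, ⟨⟨hℓT, by simp; omega⟩, by rw [hcond']; omega⟩, hℓ0⟩)
    | -- genus
      (have : (T \ {a})ᶜ = insert a Tᶜ := by
         ext x; simp [not_and_or]; tauto
       unfold genusNS
       rw [this, Set.ncard_insert_of_notMem (by simpa using haT) hT.2.2])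
  }

theorem stmt7 (S : Set ℕ) (h : IsNumSgp S) (hno : ¬ IsOrdinary S)
    (hd : ∃ d : ℕ, 1 < d ∧ ∀ x ∈ leftElts S, d ∣ x) :
    ∀ g : ℕ, genusNS S ≤ g → ∃ T, IsDescendant S T ∧ genusNS T = g := by
  obtain ⟨d, hd, hdiv⟩ := hd
  have hℓ : ∃ ℓ ∈ leftElts S, ℓ ≠ 0 := by
    by_contra hcon
    push_neg at hcon
    apply hno
    refine ⟨condNS S, ?_⟩
    ext x
    simp only [Set.mem_union, Set.mem_singleton_iff, Set.mem_setOf_eq]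
    constructor
    · intro hx
      by_cases hx0 : x = 0
      · exact Or.inl hx0
      · right
        by_contra hxc
        exact hx0 (hcon x ⟨hx, by omega⟩)
    · rintro (rfl | hx)
      · exact h.1
      · exact cond_mem_set S h x hx
  have key : ∀ k : ℕ, ∃ T, IsDescendant S T ∧ IsNumSgp T ∧
      (∀ x ∈ leftElts T, d ∣ x) ∧ (∃ ℓ ∈ leftElts T, ℓ ≠ 0) ∧
      genusNS T = genusNS S + k := by
    intro k
    induction k with
    | zero => exact ⟨S, Relation.ReflTransGen.refl, h, hdiv, hℓ, rfl⟩
    | succ n ih =>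
      obtain ⟨T, hdesc, hT, hdvd, hne, hg⟩ := ih
      obtain ⟨T', hchild, hT', hdvd', hne', hg'⟩ := step_lemma d hd T hT hdvd hne
      exact ⟨T', hdesc.tail hchild, hT', hdvd', hne', by omega⟩
  intro g hg
  obtain ⟨T, hdesc, -, -, -, hgT⟩ := key (g - genusNS S)
  exact ⟨T, hdesc, by omega⟩
end

section
/- If a numerical semigroup Λ lies in an infinite chain, then at most two of its children lie in infinite chains; more precisely, the only children of Λ that can have infinitely many descendants are Λ∖{c} and Λ∖{c+1}, where c is the conductor of Λ. -/
/-- The defining set of the conductor is nonempty for a numerical semigroup. -/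
lemma condSet_nonempty {S : Set ℕ} (h : IsNumSgp S) :
    {c : ℕ | ∀ n, c ≤ n → n ∈ S}.Nonempty := by
  obtain ⟨m, hm⟩ := h.2.2.bddAbove
  refine ⟨m + 1, fun n hn => ?_⟩
  by_contra hns
  exact absurd (hm hns) (by omega)

lemma cond_spec {S : Set ℕ} (h : IsNumSgp S) : ∀ n, condNS S ≤ n → n ∈ S :=
  Nat.sInf_mem (condSet_nonempty h)

lemma cond_remove {X : Set ℕ} {a : ℕ} (hnot : a ∉ X)
    (hup : ∀ n, a + 1 ≤ n → n ∈ X) : condNS X = a + 1 := by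
  have hne : {c : ℕ | ∀ n, c ≤ n → n ∈ X}.Nonempty := ⟨a + 1, hup⟩
  have hmem := Nat.sInf_mem hne
  have hle : sInf {c : ℕ | ∀ n, c ≤ n → n ∈ X} ≤ a + 1 := Nat.sInf_le hup
  have hgt : ¬ sInf {c : ℕ | ∀ n, c ≤ n → n ∈ X} ≤ a := fun hh => hnot (hmem a hh)
  show sInf {c : ℕ | ∀ n, c ≤ n → n ∈ X} = a + 1
  omega

lemma myNsmulMem {T : Set ℕ} (h0 : 0 ∈ T)
    (hadd : ∀ a ∈ T, ∀ b ∈ T, a + b ∈ T) {x : ℕ} (hx : x ∈ T) :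
    ∀ k : ℕ, k * x ∈ T := by
  intro k
  induction k with
  | zero => simpa using h0
  | succ k ih => have := hadd _ ih _ hx; simpa [Nat.succ_mul] using this

/-- A semigroup containing c and c+1 contains everything ≥ c*c. -/
lemma mem_of_pair {T : Set ℕ} (h0 : 0 ∈ T)
    (hadd : ∀ a ∈ T, ∀ b ∈ T, a + b ∈ T) {c : ℕ} (hc2 : 2 ≤ c)
    (hc : c ∈ T) (hc1 : c + 1 ∈ T) : ∀ n, c * c ≤ n → n ∈ T := by
  intro n hn
  set q := n / c with hq
  set r := n % c with hr
  have hcpos : 0 < c := by omega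
  have hdm : c * q + r = n := Nat.div_add_mod n c
  have hrc : r < c := Nat.mod_lt _ hcpos
  have hqc : c ≤ q := (Nat.le_div_iff_mul_le hcpos).2 (by nlinarith)
  obtain ⟨k, hk⟩ := Nat.le.dest (le_of_lt (lt_of_lt_of_le hrc hqc))
  have key : k * c + r * (c + 1) = n := by
    have : k * c + r * (c + 1) = c * (r + k) + r := by ring
    rw [this, hk, hdm]
  have h1 : k * c ∈ T := myNsmulMem h0 hadd hc k
  have h2 : r * (c + 1) ∈ T := myNsmulMem h0 hadd hc1 r
  rw [← key]
  exact hadd _ h1 _ h2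

/-- Minimal generators are bounded when c, c+1 are in the semigroup. -/
lemma minGen_lt {T : Set ℕ} (h0 : 0 ∈ T)
    (hadd : ∀ a ∈ T, ∀ b ∈ T, a + b ∈ T) {c : ℕ} (hc2 : 2 ≤ c)
    (hc : c ∈ T) (hc1 : c + 1 ∈ T) {b : ℕ} (hb : IsMinGen T b) :
    b < 2 * (c * c) := by
  by_contra hge
  push_neg at hge
  have h1 : c * c ∈ T := mem_of_pair h0 hadd hc2 hc hc1 _ le_rfl
  have h2 : b - c * c ∈ T := mem_of_pair h0 hadd hc2 hc hc1 _ (by omega)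
  have hc4 : 4 ≤ c * c := by nlinarith
  exact hb.2.2 ⟨c * c, h1, b - c * c, h2, by omega, by omega, by omega⟩

theorem stmt8 (S : Set ℕ) (h : IsNumSgp S)
    (hinf : {T | IsDescendant S T}.Infinite)
    (C : Set ℕ) (hC : IsChild S C)
    (hCinf : {T | IsDescendant C T}.Infinite) :
    C = S \ {condNS S} ∨ C = S \ {condNS S + 1} := by
  obtain ⟨a, hgen, hac, rfl⟩ := hC
  set c := condNS S with hcdef
  by_cases hsmall : a ≤ c + 1
  · rcases (by omega : a = c ∨ a = c + 1) with rfl | rfl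
    · exact Or.inl rfl
    · exact Or.inr rfl
  push_neg at hsmall
  exfalso
  have hspec := cond_spec h
  -- c ≥ 2
  have hc2 : 2 ≤ c := by
    by_contra hlt
    push_neg at hlt
    have hall : ∀ n, n ∈ S := by
      intro n
      rcases Nat.eq_zero_or_pos n with rfl | hn
      · exact h.1
      · exact hspec n (by omega)
    exact hgen.2.2 ⟨1, hall 1, a - 1, hall _, by omega, by omega, by omega⟩
  have hcS : c ∈ S := hspec c le_rfl
  have hc1S : c + 1 ∈ S := hspec _ (by omega)
  set C := S \ {a} with hCdef
  -- invariant
  set P : Set ℕ → Prop := fun T =>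
    (0 ∈ T ∧ (∀ x ∈ T, ∀ y ∈ T, x + y ∈ T) ∧ Tᶜ.Finite) ∧
      c ∈ T ∧ c + 1 ∈ T ∧ c + 2 ≤ condNS T with hPdef
  have hPC : P C := by
    refine ⟨⟨⟨h.1, fun hh => hgen.2.1 hh.symm⟩, ?_, ?_⟩,
      ⟨hcS, by simp only [Set.mem_singleton_iff]; omega⟩,
      ⟨hc1S, by simp only [Set.mem_singleton_iff]; omega⟩, ?_⟩
    · rintro x ⟨hx, hxa⟩ y ⟨hy, hya⟩
      refine ⟨h.2.1 x hx y hy, fun hxy => ?_⟩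
      rcases Nat.eq_zero_or_pos x with rfl | hxpos
      · exact hya (by simpa using hxy)
      rcases Nat.eq_zero_or_pos y with rfl | hypos
      · exact hxa (by simpa using hxy)
      exact hgen.2.2 ⟨x, hx, y, hy, by omega, by omega, hxy⟩
    · have : Cᶜ ⊆ Sᶜ ∪ {a} := by
        intro x hx
        by_cases hxa : x = a
        · exact Or.inr hxa
        · exact Or.inl fun hxS => hx ⟨hxS, hxa⟩
      exact (h.2.2.union (Set.finite_singleton a)).subset this
    · have : condNS C = a + 1 := by
        apply cond_remove (fun hh => hh.2 rfl)
        intro n hn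
        exact ⟨hspec n (by omega), by simp only [Set.mem_singleton_iff]; omega⟩
      omega
  have hstep : ∀ T T', P T → IsChild T T' → P T' := by
    rintro T T' ⟨⟨h0, hadd, hfin⟩, hcT, hc1T, hcond⟩ ⟨b, hbgen, hbc, rfl⟩
    have hb2 : c + 2 ≤ b := le_trans hcond hbc
    have hspecT : ∀ n, condNS T ≤ n → n ∈ T := cond_spec ⟨h0, hadd, hfin⟩
    refine ⟨⟨⟨h0, by simp only [Set.mem_singleton_iff]; omega⟩, ?_, ?_⟩,
      ⟨hcT, by simp only [Set.mem_singleton_iff]; omega⟩,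
      ⟨hc1T, by simp only [Set.mem_singleton_iff]; omega⟩, ?_⟩
    · rintro x ⟨hx, hxb⟩ y ⟨hy, hyb⟩
      refine ⟨hadd x hx y hy, fun hxy => ?_⟩
      rcases Nat.eq_zero_or_pos x with rfl | hxpos
      · exact hyb (by simpa using hxy)
      rcases Nat.eq_zero_or_pos y with rfl | hypos
      · exact hxb (by simpa using hxy)
      exact hbgen.2.2 ⟨x, hx, y, hy, by omega, by omega, hxy⟩
    · have : (T \ {b})ᶜ ⊆ Tᶜ ∪ {b} := by
        intro x hx
        by_cases hxb : x = b
        · exact Or.inr hxb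
        · exact Or.inl fun hxT => hx ⟨hxT, hxb⟩
      exact (hfin.union (Set.finite_singleton b)).subset this
    · have : condNS (T \ {b}) = b + 1 := by
        apply cond_remove (fun hh => hh.2 rfl)
        intro n hn
        exact ⟨hspecT n (by omega), by simp only [Set.mem_singleton_iff]; omega⟩
      omega
  have hdesc : ∀ T, IsDescendant C T → P T := by
    intro T hT
    induction hT with
    | refl => exact hPC
    | tail _ hchild ih => exact hstep _ _ ih hchild
  -- every descendant contains [c*c, ∞)
  have htail : ∀ T, IsDescendant C T → ∀ n, c * c ≤ n → n ∈ T := by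
    intro T hT
    obtain ⟨⟨h0, hadd, _⟩, hcT, hc1T, _⟩ := hdesc T hT
    exact mem_of_pair h0 hadd hc2 hcT hc1T
  -- finiteness of descendants
  have hfin : {T | IsDescendant C T}.Finite := by
    have himg : ((fun T => T ∩ Set.Iio (c * c)) '' {T | IsDescendant C T}).Finite := by
      apply (Set.Finite.finite_subsets (Set.finite_Iio (c * c))).subset
      rintro X ⟨T, _, rfl⟩
      exact Set.inter_subset_right
    refine Set.Finite.of_finite_image himg ?_
    intro T₁ h₁ T₂ h₂ heq
    have heq' : T₁ ∩ Set.Iio (c * c) = T₂ ∩ Set.Iio (c * c) := heq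
    ext n
    by_cases hn : n < c * c
    · constructor
      · intro hnT
        have : n ∈ T₂ ∩ Set.Iio (c * c) := heq' ▸ ⟨hnT, hn⟩
        exact this.1
      · intro hnT
        have : n ∈ T₁ ∩ Set.Iio (c * c) := heq'.symm ▸ ⟨hnT, hn⟩
        exact this.1
    · exact ⟨fun _ => htail T₂ h₂ n (by omega), fun _ => htail T₁ h₁ n (by omega)⟩
  exact hCinf hfin
end

section
/- For every pair of integers (g, m) with g ≥ 1 and 2 ≤ m ≤ g + 1, the set Λ = {0, m, 2m, …, ⌊g/(m−1)⌋·m} ∪ [g + 1 + ⌊g/(m−1)⌋, ∞) is a numerical semigroup of genus g and multiplicity m whose left elements are all multiples of m (so gcd of left elements is m ≠ 1). -/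
theorem stmt10 (g m : ℕ) (hg : 1 ≤ g) (hm : 2 ≤ m) (hmg : m ≤ g + 1) :
    let Λ : Set ℕ := {x | ∃ k ≤ g / (m - 1), x = k * m} ∪ {x | g + 1 + g / (m - 1) ≤ x}
    IsNumSgp Λ ∧ genusNS Λ = g ∧ multNS Λ = m ∧ ∀ x ∈ leftElts Λ, m ∣ x := by
  intro Λ
  obtain ⟨q, hqdef⟩ : ∃ q, g / (m - 1) = q := ⟨_, rfl⟩
  have hΛ : Λ = {x | ∃ k ≤ q, x = k * m} ∪ {x | g + 1 + q ≤ x} := by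
    simp only [Λ, hqdef]
  have hq1 : 1 ≤ q := by
    rw [← hqdef]; exact (Nat.one_le_div_iff (by omega)).2 (by omega)
  have hq2 : q * (m - 1) ≤ g := hqdef ▸ Nat.div_mul_le_self g (m - 1)
  have hq3 : g < (q + 1) * (m - 1) := by
    refine (Nat.div_lt_iff_lt_mul (by omega : 0 < m - 1)).1 ?_
    omega
  obtain ⟨n, rfl⟩ : ∃ n, m = n + 1 := ⟨m - 1, by omega⟩
  have hn : 1 ≤ n := by omega
  simp only [Nat.add_sub_cancel] at hq2 hq3
  clear hqdef
  rw [hΛ]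
  clear hΛ
  have hqm : q * (n + 1) ≤ g + q := by nlinarith
  have hbig : g + 1 + q + 1 ≤ (q + 1) * (n + 1) := by nlinarith
  -- closure
  have hclosed : ∀ a ∈ ({x | ∃ k ≤ q, x = k * (n+1)} ∪ {x | g + 1 + q ≤ x} : Set ℕ),
      ∀ b ∈ ({x | ∃ k ≤ q, x = k * (n+1)} ∪ {x | g + 1 + q ≤ x} : Set ℕ),
      a + b ∈ ({x | ∃ k ≤ q, x = k * (n+1)} ∪ {x | g + 1 + q ≤ x} : Set ℕ) := by
    rintro a (⟨k, hk, rfl⟩ | ha) b hb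
    · rcases hb with ⟨l, hl, rfl⟩ | hb
      · by_cases h : k + l ≤ q
        · exact Or.inl ⟨k + l, h, by ring⟩
        · refine Or.inr ?_
          have h1 : (q + 1) * (n + 1) ≤ (k + l) * (n + 1) :=
            Nat.mul_le_mul_right (n + 1) (by omega)
          have h2 : k * (n + 1) + l * (n + 1) = (k + l) * (n + 1) := by ring
          simp only [Set.mem_setOf_eq]
          omega
      · refine Or.inr ?_
        simp only [Set.mem_setOf_eq] at hb ⊢
        omega
    · refine Or.inr ?_
      simp only [Set.mem_setOf_eq] at ha ⊢
      omega
  -- complement description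
  have hcompl : ({x | ∃ k ≤ q, x = k * (n+1)} ∪ {x | g + 1 + q ≤ x} : Set ℕ)ᶜ =
      ↑((Finset.range (g + 1 + q)) \ (Finset.range (q + 1)).image (· * (n+1))) := by
    ext x
    simp only [Set.mem_compl_iff, Set.mem_union, Set.mem_setOf_eq, Finset.mem_coe,
      Finset.mem_sdiff, Finset.mem_range, Finset.mem_image]
    constructor
    · intro hx
      push_neg at hx
      obtain ⟨h1, h2⟩ := hx
      refine ⟨h2, ?_⟩
      rintro ⟨k, hk, rfl⟩
      exact h1 k (by omega) rfl
    · rintro ⟨hx1, hx2⟩ h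
      rcases h with ⟨k, hk, rfl⟩ | h
      · exact hx2 ⟨k, by omega, rfl⟩
      · omega
  have hcard : ((Finset.range (g + 1 + q)) \ (Finset.range (q + 1)).image (· * (n+1))).card
      = g := by
    rw [Finset.card_sdiff_of_subset]
    · rw [Finset.card_image_of_injective _
        (fun a b h => by exact Nat.eq_of_mul_eq_mul_right (by omega) h)]
      simp only [Finset.card_range]
      omega
    · intro x hx
      simp only [Finset.mem_image, Finset.mem_range] at hx ⊢
      obtain ⟨k, hk, rfl⟩ := hx
      have : k * (n + 1) ≤ q * (n + 1) := Nat.mul_le_mul_right (n + 1) (by omega)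
      omega
  have hgenus : genusNS ({x | ∃ k ≤ q, x = k * (n+1)} ∪ {x | g + 1 + q ≤ x} : Set ℕ) = g := by
    rw [genusNS, hcompl, Set.ncard_coe_finset, hcard]
  have hmem_m : (n + 1) ∈ ({x | ∃ k ≤ q, x = k * (n+1)} ∪ {x | g + 1 + q ≤ x} : Set ℕ) :=
    Or.inl ⟨1, hq1, (one_mul _).symm⟩
  have hmult : multNS ({x | ∃ k ≤ q, x = k * (n+1)} ∪ {x | g + 1 + q ≤ x} : Set ℕ) = n + 1 := by
    unfold multNS
    apply le_antisymm
    · apply Nat.sInf_le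
      exact ⟨hmem_m, by omega⟩
    · have hnon : {x | x ∈ ({x | ∃ k ≤ q, x = k * (n+1)} ∪ {x | g + 1 + q ≤ x} : Set ℕ) ∧ x ≠ 0}.Nonempty :=
        ⟨n + 1, hmem_m, by omega⟩
      apply le_csInf hnon
      rintro x ⟨(⟨k, hk, rfl⟩ | hx), hne⟩
      · have hk1 : 1 ≤ k := by
          rcases Nat.eq_zero_or_pos k with h | h
          · exact absurd (by simp [h]) hne
          · exact h
        calc n + 1 = 1 * (n + 1) := (one_mul _).symm
          _ ≤ k * (n + 1) := Nat.mul_le_mul_right _ hk1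
      · simp only [Set.mem_setOf_eq] at hx
        omega
  have hcond : condNS ({x | ∃ k ≤ q, x = k * (n+1)} ∪ {x | g + 1 + q ≤ x} : Set ℕ)
      ≤ g + 1 + q := by
    unfold condNS
    exact Nat.sInf_le (fun x hx => Or.inr hx)
  refine ⟨⟨Or.inl ⟨0, by omega, (zero_mul _).symm⟩, hclosed, ?_⟩, hgenus, hmult, ?_⟩
  · rw [hcompl]
    exact Finset.finite_toSet _
  · rintro x ⟨hxΛ, hxlt⟩
    rcases hxΛ with ⟨k, hk, rfl⟩ | hx
    · exact Dvd.intro_left k rfl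
    · simp only [Set.mem_setOf_eq] at hx
      exact absurd hxlt (not_lt.2 (le_trans hcond hx))
end

section
/- Let Λ be a numerical semigroup with conductor c whose left elements have gcd d > 1. Then for every i with 0 ≤ i ≤ d−1 such that d does not divide c+i, the number c+i is a minimal generator of Λ. Consequently, Λ has at least d−1 minimal generators in the interval [c, c+d−1], and hence at least d−1 children. -/
theorem stmt11 (S : Set ℕ) (h : IsNumSgp S) (d : ℕ) (hd1 : 1 < d)
    (hdvd : ∀ x ∈ leftElts S, d ∣ x)
    (hgcd : ∀ e : ℕ, (∀ x ∈ leftElts S, e ∣ x) → e ∣ d) :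
    (∀ i ≤ d - 1, ¬ d ∣ (condNS S + i) → IsMinGen S (condNS S + i)) ∧
    d - 1 ≤ {a | a ∈ Set.Icc (condNS S) (condNS S + d - 1) ∧ IsMinGen S a}.ncard := by
  obtain ⟨h0, hadd, hfin⟩ := h
  have hcond : ∀ n, condNS S ≤ n → n ∈ S := by
    have hne : {c : ℕ | ∀ n, c ≤ n → n ∈ S}.Nonempty := by
      obtain ⟨N, hN⟩ := hfin.bddAbove
      refine ⟨N + 1, fun n hn => ?_⟩
      by_contra hns
      exact absurd (hN hns) (by omega)
    exact Nat.sInf_mem hne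
  have hx : ∃ x ∈ leftElts S, x ≠ 0 := by
    by_contra hno
    push_neg at hno
    have hdd := hgcd (d + 1) (fun x hx => by rw [hno x hx]; exact dvd_zero _)
    have := Nat.le_of_dvd (by omega) hdd
    omega
  obtain ⟨x0, hx0L, hx0ne⟩ := hx
  have hdc : d < condNS S := by
    have h1 := hdvd x0 hx0L
    have h2 := Nat.le_of_dvd (Nat.pos_of_ne_zero hx0ne) h1
    have h3 := hx0L.2
    omega
  have main : ∀ i ≤ d - 1, ¬ d ∣ (condNS S + i) → IsMinGen S (condNS S + i) := by
    intro i hi hnd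
    refine ⟨hcond _ (by omega), by omega, ?_⟩
    rintro ⟨x, hxS, y, hyS, hx0, hy0, hxy⟩
    by_cases hxc : x < condNS S
    · by_cases hyc : y < condNS S
      · have dx := hdvd x ⟨hxS, hxc⟩
        have dy := hdvd y ⟨hyS, hyc⟩
        exact hnd (hxy ▸ Nat.dvd_add dx dy)
      · have dx := hdvd x ⟨hxS, hxc⟩
        have hxd := Nat.le_of_dvd (Nat.pos_of_ne_zero hx0) dx
        omega
    · have hyc : y < condNS S := by omega
      have dy := hdvd y ⟨hyS, hyc⟩
      have hyd := Nat.le_of_dvd (Nat.pos_of_ne_zero hy0) dy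
      omega
  refine ⟨main, ?_⟩
  classical
  set c := condNS S with hc
  set T := (Finset.range d).filter (fun i => ¬ d ∣ (c + i)) with hT
  have hone : ((Finset.range d).filter (fun i => d ∣ (c + i))).card = 1 := by
    rw [Finset.card_eq_one]
    have hrlt : c % d < d := Nat.mod_lt _ (by omega)
    have hdm := Nat.div_add_mod c d
    refine ⟨(d - c % d) % d, ?_⟩
    have hj0lt : (d - c % d) % d < d := Nat.mod_lt _ (by omega)
    have hj0dvd : d ∣ (c + (d - c % d) % d) := by
      by_cases hr : c % d = 0
      · have : (d - c % d) % d = 0 := by rw [hr, Nat.sub_zero, Nat.mod_self]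
        rw [this, Nat.add_zero]
        exact Nat.dvd_of_mod_eq_zero hr
      · have hlt : d - c % d < d := by omega
        rw [Nat.mod_eq_of_lt hlt]
        refine ⟨c / d + 1, ?_⟩
        rw [Nat.mul_add, Nat.mul_one]
        omega
    ext j
    simp only [Finset.mem_filter, Finset.mem_range, Finset.mem_singleton]
    constructor
    · rintro ⟨hj, hdj⟩
      have h1 := Nat.dvd_sub hdj hj0dvd
      have h2 := Nat.dvd_sub hj0dvd hdj
      have e1 : (c + j) - (c + (d - c % d) % d) = j - (d - c % d) % d := by omega
      have e2 : (c + (d - c % d) % d) - (c + j) = (d - c % d) % d - j := by omega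
      rw [e1] at h1; rw [e2] at h2
      have z1 : j - (d - c % d) % d = 0 := Nat.eq_zero_of_dvd_of_lt h1 (by omega)
      have z2 : (d - c % d) % d - j = 0 := Nat.eq_zero_of_dvd_of_lt h2 (by omega)
      omega
    · rintro rfl
      exact ⟨hj0lt, hj0dvd⟩
  have hTcard : T.card = d - 1 := by
    have hsplit : ((Finset.range d).filter (fun i => d ∣ (c + i))).card + T.card = d := by
      rw [hT]
      simpa using Finset.card_filter_add_card_filter_not
        (s := Finset.range d) (p := fun i => d ∣ (c + i))
    omega
  have hsub : ↑(T.image (fun i => c + i)) ⊆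
      {a | a ∈ Set.Icc c (c + d - 1) ∧ IsMinGen S a} := by
    intro a ha
    simp only [Finset.coe_image, Set.mem_image, Finset.mem_coe, hT,
      Finset.mem_filter, Finset.mem_range] at ha
    obtain ⟨i, ⟨hid, hnd⟩, rfl⟩ := ha
    exact ⟨⟨by omega, by omega⟩, main i (by omega) hnd⟩
  calc d - 1 = T.card := hTcard.symm
    _ = (T.image (fun i => c + i)).card :=
        (Finset.card_image_of_injOn (fun a _ b _ hab => by omega)).symm
    _ = (↑(T.image (fun i => c + i)) : Set ℕ).ncard := (Set.ncard_coe_finset _).symm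
    _ ≤ _ := Set.ncard_le_ncard hsub
        ((Set.finite_Icc c (c + d - 1)).subset (fun a ha => ha.1))
end

section
/- Let Λ be a numerical semigroup with conductor c, multiplicity m, and left-element gcd d > 1. If m = d, then Λ has exactly d − 1 minimal generators greater than or equal to c (namely the elements of [c, c+d−1] not divisible by d). -/
theorem stmt12 (S : Set ℕ) (h : IsNumSgp S) (d : ℕ) (hd1 : 1 < d)
    (hdvd : ∀ x ∈ leftElts S, d ∣ x)
    (hgcd : ∀ e : ℕ, (∀ x ∈ leftElts S, e ∣ x) → e ∣ d)
    (hmd : multNS S = d) :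
    {a | IsMinGen S a ∧ condNS S ≤ a} =
      {a | a ∈ Set.Icc (condNS S) (condNS S + d - 1) ∧ ¬ d ∣ a} ∧
    {a | IsMinGen S a ∧ condNS S ≤ a}.ncard = d - 1 := by
  obtain ⟨h0, hadd, hfin⟩ := h
  have hcond : ∀ n, condNS S ≤ n → n ∈ S := by
    have hne : {c : ℕ | ∀ n, c ≤ n → n ∈ S}.Nonempty := by
      obtain ⟨N, hN⟩ := hfin.bddAbove
      refine ⟨N + 1, fun n hn => ?_⟩
      by_contra hns
      exact absurd (hN hns) (by omega)
    exact Nat.sInf_mem hne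
  set c := condNS S with hc
  have hdS : d ∈ S := by
    unfold multNS at hmd
    have h1 := Nat.sInf_mem (⟨c + 1, hcond _ (Nat.le_succ c), Nat.succ_ne_zero c⟩ :
      {x | x ∈ S ∧ x ≠ 0}.Nonempty)
    rw [hmd] at h1
    exact h1.1
  have hdmin : ∀ x ∈ S, x ≠ 0 → d ≤ x := by
    intro x hx hx0
    rw [← hmd]
    exact Nat.sInf_le ⟨hx, hx0⟩
  have hdc : d < c := by
    by_contra hle
    push_neg at hle
    have h2 : (d + 1) ∣ d := by
      apply hgcd
      intro x hx
      obtain ⟨hxS, hxc⟩ := hx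
      have hx0 : x = 0 := by
        by_contra h0
        exact absurd (hdmin x hxS h0) (by omega)
      simp [hx0]
    have := Nat.le_of_dvd (by omega) h2
    omega
  have hmul : ∀ k : ℕ, k * d ∈ S := by
    intro k
    induction k with
    | zero => simpa using h0
    | succ n ih => simpa [Nat.succ_mul] using hadd _ ih _ hdS
  have hmain : {a | IsMinGen S a ∧ c ≤ a} = {a | a ∈ Set.Icc c (c + d - 1) ∧ ¬ d ∣ a} := by
    ext a
    simp only [Set.mem_setOf_eq, Set.mem_Icc]
    constructor
    · rintro ⟨⟨haS, ha0, hnsum⟩, hca⟩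
      refine ⟨⟨hca, ?_⟩, ?_⟩
      · by_contra hgt
        push_neg at hgt
        exact hnsum ⟨a - d, hcond _ (by omega), d, hdS, by omega, by omega, by omega⟩
      · rintro ⟨k, rfl⟩
        have hk : 2 ≤ k := by
          by_contra hk1
          push_neg at hk1
          interval_cases k <;> omega
        have hs : (k - 1) * d ∈ S := hmul (k - 1)
        refine hnsum ⟨(k - 1) * d, hs, d, hdS, ?_, by omega, ?_⟩
        · have : 1 * d ≤ (k - 1) * d := Nat.mul_le_mul_right d (by omega)
          omega
        · have : (k - 1) * d + 1 * d = k * d := by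
            rw [← Nat.add_mul]
            congr 1
            omega
          simp only [one_mul] at this
          rw [mul_comm d k]
          omega
    · rintro ⟨⟨hca, hle⟩, hnd⟩
      refine ⟨⟨hcond a hca, by omega, ?_⟩, hca⟩
      rintro ⟨x, hxS, y, hyS, hx0, hy0, rfl⟩
      have hdx := hdmin x hxS hx0
      have hdy := hdmin y hyS hy0
      rcases lt_or_ge x c with hxc | hxc
      · rcases lt_or_ge y c with hyc | hyc
        · exact hnd (Nat.dvd_add (hdvd x ⟨hxS, hxc⟩) (hdvd y ⟨hyS, hyc⟩))
        · omega
      · omega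
  refine ⟨hmain, ?_⟩
  rw [hmain]
  have hset : {a | a ∈ Set.Icc c (c + d - 1) ∧ ¬ d ∣ a} =
      ↑((Finset.Ioc (c - 1) (c + d - 1)).filter (fun a => ¬ d ∣ a)) := by
    ext a
    simp only [Finset.coe_filter, Finset.mem_Ioc, Set.mem_setOf_eq, Set.mem_Icc]
    constructor
    · rintro ⟨⟨h1, h2⟩, h3⟩; exact ⟨⟨by omega, by omega⟩, h3⟩
    · rintro ⟨⟨h1, h2⟩, h3⟩; exact ⟨⟨by omega, by omega⟩, h3⟩
  rw [hset, Set.ncard_coe_finset]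
  have key : ((Finset.Ioc (c - 1) (c + d - 1)).filter (fun a => d ∣ a)).card = 1 := by
    have hsplit : Finset.Ioc 0 (c + d - 1) =
        Finset.Ioc 0 (c - 1) ∪ Finset.Ioc (c - 1) (c + d - 1) :=
      (Finset.Ioc_union_Ioc_eq_Ioc (Nat.zero_le _) (by omega)).symm
    have hdisj : Disjoint ((Finset.Ioc 0 (c - 1)).filter (fun a => d ∣ a))
        ((Finset.Ioc (c - 1) (c + d - 1)).filter (fun a => d ∣ a)) := by
      rw [Finset.disjoint_left]
      intro x hx1 hx2
      simp only [Finset.mem_filter, Finset.mem_Ioc] at hx1 hx2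
      omega
    have h1 := Nat.Ioc_filter_dvd_card_eq_div (c + d - 1) d
    have h2 := Nat.Ioc_filter_dvd_card_eq_div (c - 1) d
    rw [hsplit, Finset.filter_union, Finset.card_union_of_disjoint hdisj] at h1
    have hdiv : (c + d - 1) / d = (c - 1) / d + 1 := by
      rw [show c + d - 1 = (c - 1) + d by omega, Nat.add_div_right _ (by omega)]
    omega
  have htot : (Finset.Ioc (c - 1) (c + d - 1)).card = d := by
    rw [Nat.card_Ioc]; omega
  have hfc := Finset.card_filter_add_card_filter_not
    (s := Finset.Ioc (c - 1) (c + d - 1)) (p := fun a => d ∣ a)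
  omega
end

section
/- For every n ≥ 1, the set M_n = {4k : k ≥ 0} ∪ [4n+2, ∞) is a numerical semigroup of genus 3n+1 with exactly three minimal generators greater than or equal to its conductor 4n+2, namely 4n+2, 4n+3, and 4n+5. -/
lemma filter_card_aux : ∀ m : ℕ,
    ((Finset.range (4*m+2)).filter (fun x => ¬ 4 ∣ x)).card = 3*m+1 := by
  intro m
  induction m with
  | zero => decide
  | succ k ih =>
    have he : 4*(k+1)+2 = ((((4*k+2)+1)+1)+1)+1 := by ring
    rw [he, Finset.range_add_one, Finset.range_add_one, Finset.range_add_one, Finset.range_add_one,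
      Finset.filter_insert, Finset.filter_insert, Finset.filter_insert, Finset.filter_insert]
    have h1 : ¬ (4 ∣ (4*k+2)+1+1+1) := by omega
    have h2 : (4 ∣ (4*k+2)+1+1) := by omega
    have h3 : ¬ (4 ∣ (4*k+2)+1) := by omega
    have h4 : ¬ (4 ∣ (4*k+2)) := by omega
    rw [if_pos h1, if_neg (by simp [h2]), if_pos h3, if_pos h4]
    rw [Finset.card_insert_of_notMem, Finset.card_insert_of_notMem,
      Finset.card_insert_of_notMem, ih]
    · ring
    · simp only [Finset.mem_filter, Finset.mem_range]; omega
    · simp only [Finset.mem_filter, Finset.mem_insert, Finset.mem_range]; omega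
    · simp only [Finset.mem_filter, Finset.mem_insert, Finset.mem_range]; omega

theorem stmt14 (n : ℕ) (hn : 1 ≤ n) :
    let M : Set ℕ := {x | 4 ∣ x} ∪ {x | 4 * n + 2 ≤ x}
    IsNumSgp M ∧ genusNS M = 3 * n + 1 ∧ condNS M = 4 * n + 2 ∧
    {a | IsMinGen M a ∧ condNS M ≤ a} = {4 * n + 2, 4 * n + 3, 4 * n + 5} := by
  intro M
  have hmem : ∀ x : ℕ, x ∈ M ↔ (4 ∣ x ∨ 4 * n + 2 ≤ x) := fun x => Iff.rfl
  have hsgp : IsNumSgp M := by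
    refine ⟨(hmem 0).2 (Or.inl ⟨0, rfl⟩), ?_, ?_⟩
    · intro a ha b hb
      rcases (hmem a).1 ha with h1 | h1 <;> rcases (hmem b).1 hb with h2 | h2 <;>
        exact (hmem _).2 (by omega)
    · apply Set.Finite.subset (Set.finite_Iio (4*n+2))
      intro x hx
      simp only [Set.mem_compl_iff, hmem, not_or, not_le] at hx
      exact Set.mem_Iio.2 hx.2
  have hcond : condNS M = 4 * n + 2 := by
    have hmem42 : (4*n+2) ∈ {c : ℕ | ∀ m, c ≤ m → m ∈ M} :=
      fun m hm => (hmem m).2 (Or.inr hm)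
    apply le_antisymm (Nat.sInf_le hmem42)
    apply le_csInf ⟨_, hmem42⟩
    intro c hc
    by_contra h
    push_neg at h
    have h1 : (4*n+1) ∈ M := hc _ (by omega)
    rcases (hmem _).1 h1 with h2 | h2 <;> omega
  have hgen : genusNS M = 3 * n + 1 := by
    have hcompl : Mᶜ = ↑((Finset.range (4*n+2)).filter (fun x => ¬ 4 ∣ x)) := by
      ext x
      simp only [Set.mem_compl_iff, hmem, not_or, not_le, Finset.coe_filter,
        Finset.mem_range, Set.mem_setOf_eq]
      tauto
    rw [genusNS, hcompl, Set.ncard_coe_finset, filter_card_aux]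
  refine ⟨hsgp, hgen, hcond, ?_⟩
  rw [hcond]
  ext a
  simp only [Set.mem_setOf_eq, Set.mem_insert_iff, Set.mem_singleton_iff, IsMinGen]
  constructor
  · rintro ⟨⟨haM, ha0, hnot⟩, hge⟩
    by_contra h
    push_neg at h
    apply hnot
    rcases Nat.lt_or_ge a (4*n+6) with hlt | hge6
    · exact ⟨4, (hmem 4).2 (Or.inl ⟨1, rfl⟩), 4*n, (hmem _).2 (Or.inl ⟨n, rfl⟩),
        by omega, by omega, by omega⟩
    · exact ⟨4, (hmem 4).2 (Or.inl ⟨1, rfl⟩), a - 4, (hmem _).2 (Or.inr (by omega)),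
        by omega, by omega, by omega⟩
  · intro h
    refine ⟨⟨(hmem a).2 (Or.inr (by omega)), by omega, ?_⟩, by omega⟩
    rintro ⟨x, hx, y, hy, hx0, hy0, hxy⟩
    rcases (hmem x).1 hx with h1 | h1 <;> rcases (hmem y).1 hy with h2 | h2 <;> omega
end

section
/- Let Λ be a numerical semigroup with multiplicity m and let Π be a non-ordinary numerical semigroup. Then Π is a child of Λ (i.e., Π = Λ∖{a} for some minimal generator a of Λ with a ≥ c(Λ)) if and only if m⊕Π is a child of m⊕Λ, where m⊕Λ := {0} ∪ {m + x : x ∈ Λ}. -/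
lemma condNS_set_nonempty {S : Set ℕ} (hS : IsNumSgp S) :
    {c : ℕ | ∀ n, c ≤ n → n ∈ S}.Nonempty := by
  obtain ⟨N, hN⟩ := hS.2.2.bddAbove
  refine ⟨N + 1, fun n hn => ?_⟩
  by_contra h
  have := hN (Set.mem_compl h)
  omega

lemma condNS_spec {S : Set ℕ} (hS : IsNumSgp S) : ∀ n, condNS S ≤ n → n ∈ S :=
  Nat.sInf_mem (condNS_set_nonempty hS)

lemma multNS_mem {S : Set ℕ} (hS : IsNumSgp S) : multNS S ∈ S ∧ multNS S ≠ 0 := by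
  have h : multNS S ∈ {x | x ∈ S ∧ x ≠ 0} :=
    Nat.sInf_mem ⟨condNS S + 1, ⟨condNS_spec hS _ (Nat.le_succ _), Nat.succ_ne_zero _⟩⟩
  exact h

theorem stmt16 (L P : Set ℕ) (hL : IsNumSgp L) (hP : IsNumSgp P)
    (hno : ¬ IsOrdinary P) :
    IsChild L P ↔ IsChild (pushNS (multNS L) L) (pushNS (multNS L) P) := by
  obtain ⟨hL0, hLadd, hLfin⟩ := hL
  have hLns : IsNumSgp L := ⟨hL0, hLadd, hLfin⟩
  set m := multNS L with hm
  obtain ⟨hmL, hmne⟩ := multNS_mem hLns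
  have hm1 : 1 ≤ m := Nat.one_le_iff_ne_zero.mpr hmne
  have hmmin : ∀ x ∈ L, x ≠ 0 → m ≤ x := fun x hx hx0 => Nat.sInf_le ⟨hx, hx0⟩
  have hcondL : ∀ n, condNS L ≤ n → n ∈ L := condNS_spec hLns
  constructor
  · rintro ⟨a, ⟨haL, ha0, hamin⟩, hac, rfl⟩
    have ham : a ≠ m := by
      rintro rfl
      apply hno
      refine ⟨m + 1, ?_⟩
      ext n
      simp only [Set.mem_diff, Set.mem_singleton_iff, Set.mem_union,
        Set.mem_setOf_eq]
      constructor
      · rintro ⟨hn, hna⟩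
        rcases eq_or_ne n 0 with rfl | h0
        · left; rfl
        · right; have := hmmin n hn h0; omega
      · rintro (rfl | h)
        · exact ⟨hL0, by omega⟩
        · exact ⟨hcondL n (by omega), by omega⟩
    refine ⟨m + a, ⟨Or.inr ⟨a, haL, rfl⟩, by omega, ?_⟩, ?_, ?_⟩
    · rintro ⟨x, hx, y, hy, hx0, hy0, hxy⟩
      simp only [pushNS, Set.mem_union, Set.mem_singleton_iff, Set.mem_image] at hx hy
      rcases hx with rfl | ⟨x', hx', rfl⟩
      · exact hx0 rfl
      rcases hy with rfl | ⟨y', hy', rfl⟩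
      · exact hy0 rfl
      rcases eq_or_ne (x' + y') 0 with h0 | h0
      · exact ham (by omega)
      · exact hamin ⟨m, hmL, x' + y', hLadd _ hx' _ hy', hmne, h0, by omega⟩
    · apply Nat.sInf_le
      intro n hn
      exact Or.inr ⟨n - m, hcondL _ (by omega), show m + (n - m) = n by omega⟩
    · ext n
      simp only [pushNS, Set.mem_union, Set.mem_singleton_iff, Set.mem_image,
        Set.mem_diff]
      constructor
      · rintro (rfl | ⟨x, ⟨hx, hxa⟩, rfl⟩)
        · exact ⟨Or.inl rfl, by omega⟩
        · have hxa' : x ≠ a := hxa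
          exact ⟨Or.inr ⟨x, hx, rfl⟩, show m + x ≠ m + a by omega⟩
      · rintro ⟨(rfl | ⟨x, hx, rfl⟩), hne⟩
        · exact Or.inl rfl
        · have hne' : m + x ≠ m + a := hne
          exact Or.inr ⟨x, ⟨hx, show x ≠ a by omega⟩, rfl⟩
  · rintro ⟨b, ⟨hbL, hb0, hbmin⟩, hbc, hPb⟩
    simp only [pushNS, Set.mem_union, Set.mem_singleton_iff, Set.mem_image] at hbL
    rcases hbL with rfl | ⟨a, haL, rfl⟩
    · exact absurd rfl hb0
    have hPeq : P = L \ {a} := by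
      ext x
      simp only [Set.mem_diff, Set.mem_singleton_iff]
      constructor
      · intro hx
        have hmx : m + x ∈ pushNS m P := Or.inr ⟨x, hx, rfl⟩
        rw [hPb] at hmx
        obtain ⟨hmx1, hmx2⟩ := hmx
        simp only [Set.mem_singleton_iff] at hmx2
        simp only [pushNS, Set.mem_union, Set.mem_singleton_iff, Set.mem_image] at hmx1
        rcases hmx1 with h | ⟨x', hx', hxx⟩
        · omega
        · have hx'x : x' = x := by omega
          subst hx'x
          exact ⟨hx', by omega⟩
      · rintro ⟨hxL, hxa⟩
        rcases eq_or_ne x 0 with rfl | hx0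
        · exact hP.1
        · have hmem : m + x ∈ pushNS m L \ {m + a} :=
            ⟨Or.inr ⟨x, hxL, rfl⟩, by simp only [Set.mem_singleton_iff]; omega⟩
          rw [← hPb] at hmem
          simp only [pushNS, Set.mem_union, Set.mem_singleton_iff, Set.mem_image] at hmem
          rcases hmem with h | ⟨x', hx', hxx⟩
          · omega
          · have : x' = x := by omega
            exact this ▸ hx'
    have ha0 : a ≠ 0 := by
      intro h
      have := hP.1
      rw [hPeq, h] at this
      exact this.2 rfl
    have hac : condNS L ≤ a := by
      rcases Nat.eq_zero_or_pos (condNS L) with h | h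
      · omega
      · have hpred : condNS L - 1 ∉ L := by
          intro hmem
          have hnot : condNS L - 1 ∉ {c : ℕ | ∀ n, c ≤ n → n ∈ L} :=
            Nat.notMem_of_lt_sInf (show condNS L - 1 < condNS L by omega)
          apply hnot
          intro n hn
          rcases eq_or_lt_of_le hn with heq | hlt
          · exact heq ▸ hmem
          · exact hcondL n (by omega)
        have hlow : m + condNS L ≤ condNS (pushNS m L) := by
          apply le_csInf
          · exact ⟨m + condNS L, fun n hn =>
              Or.inr ⟨n - m, hcondL _ (by omega), show m + (n - m) = n by omega⟩⟩
          · intro c hc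
            by_contra hlt
            push_neg at hlt
            have hmem : m + condNS L - 1 ∈ pushNS m L := hc _ (by omega)
            simp only [pushNS, Set.mem_union, Set.mem_singleton_iff, Set.mem_image] at hmem
            rcases hmem with h0 | ⟨x, hx, hxx⟩
            · omega
            · have : x = condNS L - 1 := by omega
              exact hpred (this ▸ hx)
        omega
    refine ⟨a, ⟨haL, ha0, ?_⟩, hac, hPeq⟩
    rintro ⟨x, hx, y, hy, hx0, hy0, hxy⟩
    have hxlt : x < a := by have := hmmin y hy hy0; omega
    have hylt : y < a := by have := hmmin x hx hx0; omega
    have hxP : x ∈ P := by rw [hPeq]; exact ⟨hx, by simp; omega⟩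
    have hyP : y ∈ P := by rw [hPeq]; exact ⟨hy, by simp; omega⟩
    have : x + y ∈ P := hP.2.1 x hxP y hyP
    rw [hPeq, hxy] at this
    exact this.2 rfl
end

section
/- For every n ≥ 1 and every t with 1 ≤ t ≤ n+1, the set γ_{n,t} = {6k : 0 ≤ k ≤ n} ∪ {6k, 6k+4 : n ≤ k ≤ n+t−1} ∪ {6(n+t)} ∪ [6(n+t)+2, ∞) is a numerical semigroup of genus 5n + 4t + 1. -/
theorem stmt18 (n t : ℕ) (hn : 1 ≤ n) (ht1 : 1 ≤ t) (ht : t ≤ n + 1) :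
    let γ : Set ℕ := {x | ∃ k ≤ n, x = 6 * k} ∪
      {x | ∃ k, n ≤ k ∧ k ≤ n + t - 1 ∧ (x = 6 * k ∨ x = 6 * k + 4)} ∪
      {6 * (n + t)} ∪ {x | 6 * (n + t) + 2 ≤ x}
    IsNumSgp γ ∧ genusNS γ = 5 * n + 4 * t + 1 := by
  intro γ
  have hmem : ∀ x, x ∈ γ ↔
      ((x % 6 = 0 ∧ x ≤ 6 * (n + t)) ∨
       (x % 6 = 4 ∧ 6 * n + 4 ≤ x ∧ x ≤ 6 * (n + t)) ∨
       6 * (n + t) + 2 ≤ x) := by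
    intro x
    simp only [γ, Set.mem_union, Set.mem_setOf_eq, Set.mem_singleton_iff]
    constructor
    · rintro (((⟨k, hk, rfl⟩ | ⟨k, hk1, hk2, (rfl | rfl)⟩) | rfl) | hx) <;> omega
    · rintro (⟨h1, h2⟩ | ⟨h1, h2, h3⟩ | h)
      · by_cases hx0 : x ≤ 6 * n
        · exact Or.inl (Or.inl (Or.inl ⟨x / 6, by omega, by omega⟩))
        · by_cases hx1 : x = 6 * (n + t)
          · exact Or.inl (Or.inr hx1)
          · exact Or.inl (Or.inl (Or.inr ⟨x / 6, by omega, by omega, Or.inl (by omega)⟩))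
      · exact Or.inl (Or.inl (Or.inr ⟨x / 6, by omega, by omega, Or.inr (by omega)⟩))
      · exact Or.inr h
  -- the complement as an explicit finset
  have hdisj : ∀ (a b r s : ℕ), r < 6 → s < 6 → r ≠ s →
      Disjoint ((Finset.range a).image (fun k => 6 * k + r))
        ((Finset.range b).image (fun k => 6 * k + s)) := by
    intro a b r s hr hs hrs
    simp only [Finset.disjoint_left, Finset.mem_image, Finset.mem_range]
    rintro x ⟨k, hk, rfl⟩ ⟨j, hj, hje⟩
    omega
  have hinj : ∀ r : ℕ, Function.Injective (fun k => 6 * k + r) := by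
    intro r a b h
    simp only at h
    omega
  set A : ℕ → Finset ℕ := fun r => (Finset.range (n + t)).image (fun k => 6 * k + r) with hA
  set B : Finset ℕ := (Finset.range n).image (fun k => 6 * k + 4) with hB
  set C : Finset ℕ := {6 * (n + t) + 1} with hC
  have hGset : γᶜ = ↑(A 1 ∪ (A 2 ∪ (A 3 ∪ (A 5 ∪ (B ∪ C))))) := by
    ext x
    simp only [Set.mem_compl_iff, hmem, hA, hB, hC, Finset.coe_union, Set.mem_union,
      Finset.coe_image, Finset.coe_range, Set.mem_image, Set.mem_Iio, Finset.coe_singleton,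
      Set.mem_singleton_iff]
    constructor
    · intro h
      push_neg at h
      have h6 : x % 6 = 0 ∨ x % 6 = 1 ∨ x % 6 = 2 ∨ x % 6 = 3 ∨ x % 6 = 4 ∨ x % 6 = 5 := by omega
      rcases h6 with h6 | h6 | h6 | h6 | h6 | h6
      · omega
      · by_cases hx : x = 6 * (n + t) + 1
        · exact Or.inr (Or.inr (Or.inr (Or.inr (Or.inr hx))))
        · exact Or.inl ⟨x / 6, by omega, by omega⟩
      · exact Or.inr (Or.inl ⟨x / 6, by omega, by omega⟩)
      · exact Or.inr (Or.inr (Or.inl ⟨x / 6, by omega, by omega⟩))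
      · exact Or.inr (Or.inr (Or.inr (Or.inr (Or.inl ⟨x / 6, by omega, by omega⟩))))
      · exact Or.inr (Or.inr (Or.inr (Or.inl ⟨x / 6, by omega, by omega⟩)))
    · rintro (⟨k, hk, rfl⟩ | ⟨k, hk, rfl⟩ | ⟨k, hk, rfl⟩ | ⟨k, hk, rfl⟩ | ⟨k, hk, rfl⟩ | rfl) <;>
        omega
  refine ⟨⟨(hmem 0).2 (by omega), ?_, ?_⟩, ?_⟩
  · intro a ha b hb
    rw [hmem] at ha hb ⊢
    omega
  · rw [hGset]
    exact (A 1 ∪ (A 2 ∪ (A 3 ∪ (A 5 ∪ (B ∪ C))))).finite_toSet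
  · have hBC : Disjoint B C := by
      simp only [hB, hC, Finset.disjoint_left, Finset.mem_image, Finset.mem_range,
        Finset.mem_singleton]
      rintro x ⟨k, hk, rfl⟩ hx
      omega
    have hAC : ∀ r : ℕ, r < 6 → r ≠ 1 → Disjoint (A r) C := by
      intro r hr hr1
      simp only [hA, hC, Finset.disjoint_left, Finset.mem_image, Finset.mem_range,
        Finset.mem_singleton]
      rintro x ⟨k, hk, rfl⟩ hx
      omega
    have hA1C : Disjoint (A 1) C := by
      simp only [hA, hC, Finset.disjoint_left, Finset.mem_image, Finset.mem_range,
        Finset.mem_singleton]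
      rintro x ⟨k, hk, rfl⟩ hx
      omega
    have hcard : ∀ r : ℕ, (A r).card = n + t := by
      intro r
      rw [hA, Finset.card_image_of_injective _ (hinj r), Finset.card_range]
    have hcardB : B.card = n := by
      rw [hB, Finset.card_image_of_injective _ (hinj 4), Finset.card_range]
    rw [genusNS, hGset, Set.ncard_coe_finset]
    rw [Finset.card_union_of_disjoint, Finset.card_union_of_disjoint,
      Finset.card_union_of_disjoint, Finset.card_union_of_disjoint,
      Finset.card_union_of_disjoint, hcard, hcard, hcard, hcard, hcardB]
    · simp only [hC, Finset.card_singleton]; omega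
    · exact hBC
    · simp only [Finset.disjoint_union_right]
      exact ⟨hdisj _ _ 5 4 (by omega) (by omega) (by omega), hAC 5 (by omega) (by omega)⟩
    · simp only [Finset.disjoint_union_right]
      exact ⟨hdisj _ _ 3 5 (by omega) (by omega) (by omega),
        hdisj _ _ 3 4 (by omega) (by omega) (by omega), hAC 3 (by omega) (by omega)⟩
    · simp only [Finset.disjoint_union_right]
      exact ⟨hdisj _ _ 2 3 (by omega) (by omega) (by omega),
        hdisj _ _ 2 5 (by omega) (by omega) (by omega),
        hdisj _ _ 2 4 (by omega) (by omega) (by omega), hAC 2 (by omega) (by omega)⟩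
    · simp only [Finset.disjoint_union_right]
      exact ⟨hdisj _ _ 1 2 (by omega) (by omega) (by omega),
        hdisj _ _ 1 3 (by omega) (by omega) (by omega),
        hdisj _ _ 1 5 (by omega) (by omega) (by omega),
        hdisj _ _ 1 4 (by omega) (by omega) (by omega), hA1C⟩
end

section
/- For every n ≥ 1 and every t with 1 ≤ t ≤ n, the set ν_{n,t} = {6k : 0 ≤ k ≤ n} ∪ {6k, 6k+2 : n ≤ k ≤ n+t−1} ∪ {6(n+t), 6(n+t)+2} ∪ [6(n+t)+4, ∞) is a numerical semigroup of genus 5n + 4t + 2. -/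
def Qp (n t x : ℕ) : Prop :=
  (x % 6 = 0 ∧ x ≤ 6 * (n + t)) ∨
  (x % 6 = 2 ∧ 6 * n ≤ x ∧ x ≤ 6 * (n + t) + 2) ∨ 6 * (n + t) + 4 ≤ x

instance : ∀ n t x, Decidable (Qp n t x) := fun n t x => by unfold Qp; infer_instance

lemma memQ (n t : ℕ) (ht1 : 1 ≤ t) (x : ℕ) :
    x ∈ ({x | ∃ k ≤ n, x = 6 * k} ∪
      {x | ∃ k, n ≤ k ∧ k ≤ n + t - 1 ∧ (x = 6 * k ∨ x = 6 * k + 2)} ∪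
      {6 * (n + t), 6 * (n + t) + 2} ∪ {x | 6 * (n + t) + 4 ≤ x} : Set ℕ) ↔ Qp n t x := by
  simp only [Set.mem_union, Set.mem_setOf_eq, Set.mem_insert_iff, Set.mem_singleton_iff, Qp]
  constructor
  · rintro (((⟨k, hk, rfl⟩ | ⟨k, hk1, hk2, rfl | rfl⟩) | (rfl | rfl)) | h) <;> omega
  · rintro (⟨h1, h2⟩ | ⟨h1, h2, h3⟩ | h)
    · rcases le_or_gt (x / 6) n with h | h
      · exact Or.inl (Or.inl (Or.inl ⟨x / 6, h, by omega⟩))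
      · rcases eq_or_lt_of_le h2 with h' | h'
        · exact Or.inl (Or.inr (Or.inl (by omega)))
        · exact Or.inl (Or.inl (Or.inr ⟨x / 6, by omega, by omega, Or.inl (by omega)⟩))
    · rcases le_or_gt x (6 * (n + t - 1) + 2) with h | h
      · exact Or.inl (Or.inl (Or.inr ⟨x / 6, by omega, by omega, Or.inr (by omega)⟩))
      · exact Or.inl (Or.inr (Or.inr (by omega)))
    · exact Or.inr h

theorem stmt19 (n t : ℕ) (hn : 1 ≤ n) (ht1 : 1 ≤ t) (ht : t ≤ n) :
    let ν : Set ℕ := {x | ∃ k ≤ n, x = 6 * k} ∪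
      {x | ∃ k, n ≤ k ∧ k ≤ n + t - 1 ∧ (x = 6 * k ∨ x = 6 * k + 2)} ∪
      {6 * (n + t), 6 * (n + t) + 2} ∪ {x | 6 * (n + t) + 4 ≤ x}
    IsNumSgp ν ∧ genusNS ν = 5 * n + 4 * t + 2 := by
  intro ν
  have hmem : ∀ x, x ∈ ν ↔ Qp n t x := memQ n t ht1
  have hcompl : νᶜ = ↑((Finset.range (6 * (n + t) + 4)).filter (fun x => ¬ Qp n t x)) := by
    ext x
    simp only [Set.mem_compl_iff, hmem, Finset.coe_filter, Finset.mem_range, Set.mem_setOf_eq]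
    unfold Qp
    constructor
    · intro h; exact ⟨by by_contra h'; exact h (by unfold Qp at *; omega), h⟩
    · tauto
  constructor
  · refine ⟨(hmem 0).mpr (by unfold Qp; omega), fun a ha b hb => ?_, ?_⟩
    · rw [hmem] at *
      unfold Qp at *; omega
    · rw [hcompl]; exact Finset.finite_toSet _
  · have : genusNS ν = ((Finset.range (6 * (n + t) + 4)).filter (fun x => ¬ Qp n t x)).card := by
      rw [genusNS, hcompl, Set.ncard_coe_finset]
    rw [this, Finset.filter_not, Finset.card_sdiff_of_subset (Finset.filter_subset _ _), Finset.card_range]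
    have hG : (Finset.range (6 * (n + t) + 4)).filter (fun x => Qp n t x) =
        (Finset.range (n + t + 1)).image (fun k => 6 * k) ∪
        (Finset.Icc n (n + t)).image (fun k => 6 * k + 2) := by
      ext x
      simp only [Finset.mem_filter, Finset.mem_range, Finset.mem_union, Finset.mem_image,
        Finset.mem_Icc]
      unfold Qp
      constructor
      · rintro ⟨hx, h1 | h2 | h3⟩
        · exact Or.inl ⟨x / 6, by omega, by omega⟩
        · exact Or.inr ⟨x / 6, ⟨by omega, by omega⟩, by omega⟩
        · omega
      · rintro (⟨k, hk, rfl⟩ | ⟨k, hk, rfl⟩) <;> constructor <;> omega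
    rw [hG, Finset.card_union_of_disjoint, Finset.card_image_of_injective,
      Finset.card_image_of_injective, Finset.card_range, Nat.card_Icc]
    · omega
    · intro a b h; simp only [] at h; omega
    · intro a b h; simp only [] at h; omega
    · rw [Finset.disjoint_left]
      rintro x hx hy
      simp only [Finset.mem_image, Finset.mem_range, Finset.mem_Icc] at hx hy
      obtain ⟨a, _, rfl⟩ := hx; obtain ⟨b, _, h⟩ := hy; omega
end
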